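/- Let P and Q be probability distributions on a finite set Z with Q(z) > 0 for all z with positive mass, and let α = min{Q(z) : Q(z) > 0}. Then TVD(P,Q)^2 ≥ (α/2) · D_KL(P ‖ Q) (reverse Pinsker inequality), and consequently 2·TVD(P,Q)^2 ≥ α · D_KL(P ‖ Q). -/

import Mathlib

/-!
Bound `D_KL` by the χ²-divergence using `log x ≤ x - 1`. Every `Q z` in the support is at least
`α`, so `χ² ≤ (1/α) ∑ (P z - Q z)²`. Since `P - Q` sums to zero, each `|P z - Q z|` is at most
`TVD(P,Q)`, so `∑ (P z - Q z)² ≤ TVD · ∑ |P z - Q z| = 2 TVD²`.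
-/

open Finset Real

section

variable {ι : Type*} [Fintype ι]

noncomputable def totalVariation (P Q : ι → ℝ) : ℝ := (1 / 2) * ∑ z, |P z - Q z|

noncomputable def kullbackLeibler (P Q : ι → ℝ) : ℝ :=
  ∑ z, if P z = 0 then 0 else P z * log (P z / Q z)

noncomputable def chiSquared (P Q : ι → ℝ) : ℝ := ∑ z, (P z - Q z) ^ 2 / Q z

theorem abs_le_half_sum_abs_of_sum_eq_zero [DecidableEq ι] {f : ι → ℝ} (hf : ∑ j, f j = 0)
    (i : ι) : |f i| ≤ (∑ j, |f j|) / 2 := by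
  have h_rest : f i = -∑ j ∈ univ.erase i, f j := by
    rw [← add_sum_erase univ f (mem_univ i)] at hf
    linarith
  have h_abs : |f i| + ∑ j ∈ univ.erase i, |f j| = ∑ j, |f j| :=
    add_sum_erase univ (fun j => |f j|) (mem_univ i)
  have h_tri : |f i| ≤ ∑ j ∈ univ.erase i, |f j| := by
    rw [h_rest, abs_neg]
    exact abs_sum_le_sum_abs _ _
  linarith

theorem sum_sq_le_sq_sum_abs_div_two_of_sum_eq_zero {f : ι → ℝ} (hf : ∑ j, f j = 0) :
    ∑ j, f j ^ 2 ≤ (∑ j, |f j|) ^ 2 / 2 := by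
  classical
  calc ∑ j, f j ^ 2 = ∑ j, |f j| * |f j| := by simp_rw [← sq, sq_abs]
    _ ≤ ∑ j, (∑ k, |f k|) / 2 * |f j| :=
        sum_le_sum fun j _ =>
          mul_le_mul_of_nonneg_right (abs_le_half_sum_abs_of_sum_eq_zero hf j) (abs_nonneg _)
    _ = (∑ j, |f j|) ^ 2 / 2 := by rw [← mul_sum]; ring

theorem sum_sq_sub_le_two_mul_totalVariation_sq {P Q : ι → ℝ} (hPQ : ∑ z, P z = ∑ z, Q z) :
    ∑ z, (P z - Q z) ^ 2 ≤ 2 * totalVariation P Q ^ 2 := by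
  have h_zero : ∑ z, (P z - Q z) = 0 := by rw [sum_sub_distrib, hPQ, sub_self]
  calc ∑ z, (P z - Q z) ^ 2 ≤ (∑ z, |P z - Q z|) ^ 2 / 2 :=
        sum_sq_le_sq_sum_abs_div_two_of_sum_eq_zero h_zero
    _ = 2 * totalVariation P Q ^ 2 := by unfold totalVariation; ring

theorem klTerm_le {p q : ℝ} (hp : 0 ≤ p) (hpq : 0 < p → 0 < q) :
    (if p = 0 then 0 else p * log (p / q)) ≤ (p - q) ^ 2 / q + (p - q) := by
  split_ifs with hp0
  · rw [hp0, zero_sub, neg_sq, sq, mul_self_div_self, add_neg_cancel]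
  · have hp_pos : 0 < p := lt_of_le_of_ne hp (Ne.symm hp0)
    have hq_pos : 0 < q := hpq hp_pos
    calc p * log (p / q) ≤ p * (p / q - 1) :=
          mul_le_mul_of_nonneg_left (log_le_sub_one_of_pos (div_pos hp_pos hq_pos)) hp
      _ = (p - q) ^ 2 / q + (p - q) := by field_simp; ring

theorem kullbackLeibler_le_chiSquared {P Q : ι → ℝ} (hP : ∀ z, 0 ≤ P z)
    (hPQ : ∑ z, P z = ∑ z, Q z) (hsupp : ∀ z, 0 < P z → 0 < Q z) :
    kullbackLeibler P Q ≤ chiSquared P Q := by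
  calc kullbackLeibler P Q ≤ ∑ z, ((P z - Q z) ^ 2 / Q z + (P z - Q z)) :=
        sum_le_sum fun z _ => klTerm_le (hP z) (hsupp z)
    _ = chiSquared P Q := by
        rw [sum_add_distrib, sum_sub_distrib, hPQ, sub_self, add_zero, chiSquared]

theorem chiSquared_le_sum_sq_sub_div {P Q : ι → ℝ} {α : ℝ} (hα : 0 < α)
    (hQα : ∀ z, 0 < Q z → α ≤ Q z) :
    chiSquared P Q ≤ (∑ z, (P z - Q z) ^ 2) / α := by
  rw [chiSquared, sum_div]
  refine sum_le_sum fun z _ => ?_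
  rcases lt_or_ge 0 (Q z) with hQ | hQ
  · exact div_le_div_of_nonneg_left (sq_nonneg _) hα (hQα z hQ)
  · exact (div_nonpos_of_nonneg_of_nonpos (sq_nonneg _) hQ).trans (by positivity)

end

theorem reverse_pinsker_general {Z : Type*} [Fintype Z] [DecidableEq Z]
    (P Q : Z → ℝ)
    (hP0 : ∀ z, 0 ≤ P z)
    (hP1 : ∑ z, P z = 1) (hQ1 : ∑ z, Q z = 1)
    (hsupp : ∀ z, 0 < P z → 0 < Q z)
    (α : ℝ)
    (hne : (Finset.univ.filter (fun z => 0 < Q z)).Nonempty)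
    (hα : α = (Finset.univ.filter (fun z => 0 < Q z)).inf' hne Q) :
    ((1 / 2) * ∑ z, |P z - Q z|) ^ 2 ≥
        (α / 2) * ∑ z, (if P z = 0 then 0 else P z * Real.log (P z / Q z)) ∧
    2 * ((1 / 2) * ∑ z, |P z - Q z|) ^ 2 ≥
        α * ∑ z, (if P z = 0 then 0 else P z * Real.log (P z / Q z)) := by
  have hPQ : ∑ z, P z = ∑ z, Q z := hP1.trans hQ1.symm
  have hα_pos : 0 < α := by
    obtain ⟨z, hz, hQz⟩ := exists_mem_eq_inf' hne Q
    rw [hα, hQz]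
    exact (mem_filter.mp hz).2
  have hQα : ∀ z, 0 < Q z → α ≤ Q z := fun z hz =>
    hα ▸ inf'_le Q (mem_filter.mpr ⟨mem_univ z, hz⟩)
  have h_main : α / 2 * kullbackLeibler P Q ≤ totalVariation P Q ^ 2 :=
    calc α / 2 * kullbackLeibler P Q ≤ α / 2 * chiSquared P Q := by
          gcongr; exact kullbackLeibler_le_chiSquared hP0 hPQ hsupp
      _ ≤ α / 2 * ((2 * totalVariation P Q ^ 2) / α) := by
          gcongr
          exact (chiSquared_le_sum_sq_sub_div hα_pos hQα).trans
            (by gcongr; exact sum_sq_sub_le_two_mul_totalVariation_sq hPQ)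
      _ = totalVariation P Q ^ 2 := by field_simp
  unfold kullbackLeibler totalVariation at h_main
  exact ⟨h_main, by linarith⟩

/-- Reverse Pinsker inequality: if `α` is the minimum positive mass of `Q`
and the support of `P` is contained in that of `Q`, then
`TVD(P,Q)^2 ≥ (α/2) · D_KL(P‖Q)`, hence `2·TVD(P,Q)^2 ≥ α · D_KL(P‖Q)`. -/
theorem reverse_pinsker {Z : Type*} [Fintype Z] [DecidableEq Z]
    (P Q : Z → ℝ)
    (hP0 : ∀ z, 0 ≤ P z) (hQ0 : ∀ z, 0 ≤ Q z)
    (hP1 : ∑ z, P z = 1) (hQ1 : ∑ z, Q z = 1)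
    (hsupp : ∀ z, 0 < P z → 0 < Q z)
    (α : ℝ)
    (hne : (Finset.univ.filter (fun z => 0 < Q z)).Nonempty)
    (hα : α = (Finset.univ.filter (fun z => 0 < Q z)).inf' hne Q) :
    ((1 / 2) * ∑ z, |P z - Q z|) ^ 2 ≥
        (α / 2) * ∑ z, (if P z = 0 then 0 else P z * Real.log (P z / Q z)) ∧
    2 * ((1 / 2) * ∑ z, |P z - Q z|) ^ 2 ≥
        α * ∑ z, (if P z = 0 then 0 else P z * Real.log (P z / Q z)) :=
  reverse_pinsker_general P Q hP0 hP1 hQ1 hsupp α hne hα
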